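/- arXiv:2602.21907 — 4 statements merged into one kernel-verified Lean document; each statement's English description precedes it below -/
import Mathlib

section
/- Let e ≥ 1, n_1,…,n_e ≥ 2, N = (∑ n_i) - (e-1). The k-skeleton Δ(n_1,…,n_e)_{(k)} has f-vector (1, N, ∑_{i=1}^e C(n_i,2), …, ∑_{i=1}^e C(n_i, s+1)), where s = min{k, max n_i - 1}. -/
/-!
Two facets of `Δ(n_1,…,n_e)` share at most one vertex, so a face with at least two vertices lies
in exactly one facet, and the faces of cardinality `j ≥ 2` are counted facet by facet. The vertices
are counted by inclusion–exclusion along the chain: each new facet adds all but one of its vertices.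
-/

open Finset

namespace Finset

variable {ι V : Type*} [DecidableEq V]

lemma filter_card_eq_filter_card_le_biUnion_powerset (s : Finset ι) (S : ι → Finset V)
    {j m : ℕ} (hj : j ≤ m) :
    {σ ∈ {σ ∈ s.biUnion fun i => (S i).powerset | σ.card ≤ m} | σ.card = j} =
      s.biUnion fun i => (S i).powersetCard j := by
  ext σ
  simp only [mem_filter, mem_biUnion, mem_powerset, mem_powersetCard]
  constructor
  · rintro ⟨⟨⟨i, hi, hσ⟩, -⟩, rfl⟩
    exact ⟨i, hi, hσ, rfl⟩
  · rintro ⟨i, hi, hσ, rfl⟩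
    exact ⟨⟨⟨i, hi, hσ⟩, hj⟩, rfl⟩

lemma biUnion_powersetCard_one (s : Finset ι) (S : ι → Finset V) :
    (s.biUnion fun i => (S i).powersetCard 1) = (s.biUnion S).powersetCard 1 := by
  ext σ
  simp only [mem_biUnion, mem_powersetCard, card_eq_one]
  constructor
  · rintro ⟨i, hi, hσ, v, rfl⟩
    exact ⟨singleton_subset_iff.2 (mem_biUnion.2 ⟨i, hi, singleton_subset_iff.1 hσ⟩), v, rfl⟩
  · rintro ⟨hσ, v, rfl⟩
    obtain ⟨i, hi, hv⟩ := mem_biUnion.1 (singleton_subset_iff.1 hσ)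
    exact ⟨i, hi, singleton_subset_iff.2 hv, v, rfl⟩

lemma card_biUnion_powersetCard_of_card_inter_le_one {s : Finset ι} {S : ι → Finset V}
    (h : (s : Set ι).Pairwise fun a b => (S a ∩ S b).card ≤ 1) {j : ℕ} (hj : 2 ≤ j) :
    (s.biUnion fun i => (S i).powersetCard j).card = ∑ i ∈ s, (S i).card.choose j := by
  rw [card_biUnion]
  · simp only [card_powersetCard]
  · intro a ha b hb hab
    refine disjoint_left.2 fun σ hσa hσb => ?_
    rw [mem_powersetCard] at hσa hσb
    have : σ.card ≤ 1 := (card_le_card (subset_inter hσa.1 hσb.1)).trans (h ha hb hab)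
    omega

end Finset

section PointGlued

variable {V : Type*} [DecidableEq V]

def PointGlued (S : ℕ → Finset V) (m : ℕ) : Prop :=
  ∀ i, i + 1 < m → ∃ p : V, (range (i + 1)).biUnion S ∩ S (i + 1) = {p}

variable {S : ℕ → Finset V} {m : ℕ}

lemma PointGlued.mono {m' : ℕ} (h : PointGlued S m) (hm' : m' ≤ m) : PointGlued S m' :=
  fun i hi => h i (by omega)

lemma PointGlued.card_inter_le_one (h : PointGlued S m) {a b : ℕ} (hab : a < b) (hb : b < m) :
    (S a ∩ S b).card ≤ 1 := by
  obtain ⟨p, hp⟩ := h (b - 1) (by omega)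
  rw [Nat.sub_add_cancel (by omega : 1 ≤ b)] at hp
  calc (S a ∩ S b).card ≤ ((range b).biUnion S ∩ S b).card :=
        card_le_card (inter_subset_inter (subset_biUnion_of_mem S (mem_range.2 hab)) le_rfl)
    _ = 1 := by rw [hp, card_singleton]

lemma PointGlued.pairwise_card_inter_le_one (h : PointGlued S m) :
    ((range m : Finset ℕ) : Set ℕ).Pairwise fun a b => (S a ∩ S b).card ≤ 1 := by
  intro a ha b hb hab
  rw [coe_range, Set.mem_Iio] at ha hb
  rcases lt_or_gt_of_ne hab with hab | hba
  · exact h.card_inter_le_one hab hb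
  · rw [inter_comm]
    exact h.card_inter_le_one hba ha

lemma PointGlued.card_biUnion_range_add (h : PointGlued S m) :
    ((range m).biUnion S).card + (m - 1) = ∑ i ∈ range m, (S i).card := by
  induction m with
  | zero => simp
  | succ m ih =>
    rcases Nat.eq_zero_or_pos m with rfl | hm
    · simp
    obtain ⟨p, hp⟩ := h (m - 1) (by omega)
    rw [Nat.sub_add_cancel hm] at hp
    have hunion := card_union_add_card_inter ((range m).biUnion S) (S m)
    rw [hp, card_singleton] at hunion
    rw [sum_range_succ, range_add_one, biUnion_insert, union_comm,
      ← ih (h.mono (Nat.le_succ m))]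
    omega

end PointGlued

theorem stmt_8_general {V : Type*} [DecidableEq V] (e : ℕ)
    (n : ℕ → ℕ)
    (S : ℕ → Finset V) (hcard : ∀ i < e, (S i).card = n i)
    (hglue : ∀ i, i + 1 < e → ∃ p : V, ((Finset.range (i + 1)).biUnion S) ∩ S (i + 1) = {p})
    (k : ℕ) :
    let skel : Finset (Finset V) :=
      (((Finset.range e).biUnion (fun i => (S i).powerset)).filter (fun σ => σ.card ≤ k + 1))
    (skel.filter (fun σ => σ.card = 1)).card = (∑ i ∈ Finset.range e, n i) - (e - 1) ∧
      ∀ j, 2 ≤ j → j ≤ min k ((Finset.range e).sup n - 1) + 1 →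
        (skel.filter (fun σ => σ.card = j)).card = ∑ i ∈ Finset.range e, (n i).choose j := by
  intro skel
  have hglued : PointGlued S e := hglue
  have hsum : ∑ i ∈ range e, (S i).card = ∑ i ∈ range e, n i :=
    sum_congr rfl fun i hi => hcard i (mem_range.1 hi)
  refine ⟨?_, fun j hj2 hjk => ?_⟩
  · rw [filter_card_eq_filter_card_le_biUnion_powerset _ _ (by omega), biUnion_powersetCard_one,
      card_powersetCard, Nat.choose_one_right, ← hsum, ← hglued.card_biUnion_range_add]
    omega
  · rw [filter_card_eq_filter_card_le_biUnion_powerset _ _ (by omega),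
      card_biUnion_powersetCard_of_card_inter_le_one hglued.pairwise_card_inter_le_one hj2]
    exact sum_congr rfl fun i hi => by rw [hcard i (mem_range.1 hi)]

/-- Let `e ≥ 1`, `n_1,…,n_e ≥ 2`, `N = (∑ n_i) - (e-1)`, and let `Δ(n_1,…,n_e)` have
facets `S_0,…,S_{e-1}` with `|S_i| = n_i` and `(S_0 ∪ ⋯ ∪ S_i) ∩ S_{i+1}` a single
point for each `i < e-1`. Let `s = min{k, max n_i - 1}`. Then the `k`-skeleton (faces of
cardinality at most `k+1`) has `f`-vector `(1, N, ∑ C(n_i,2), …, ∑ C(n_i, s+1))`: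
it has `N` vertices, and for `2 ≤ j ≤ s+1` it has `∑_i C(n_i, j)` faces of
cardinality `j`. -/
theorem stmt_8 {V : Type*} [DecidableEq V] (e : ℕ) (he : 1 ≤ e)
    (n : ℕ → ℕ) (hn : ∀ i < e, 2 ≤ n i)
    (S : ℕ → Finset V) (hcard : ∀ i < e, (S i).card = n i)
    (hglue : ∀ i, i + 1 < e → ∃ p : V, ((Finset.range (i + 1)).biUnion S) ∩ S (i + 1) = {p})
    (k : ℕ) (hk : 1 ≤ k) :
    let skel : Finset (Finset V) :=
      (((Finset.range e).biUnion (fun i => (S i).powerset)).filter (fun σ => σ.card ≤ k + 1))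
    (skel.filter (fun σ => σ.card = 1)).card = (∑ i ∈ Finset.range e, n i) - (e - 1) ∧
      ∀ j, 2 ≤ j → j ≤ min k ((Finset.range e).sup n - 1) + 1 →
        (skel.filter (fun σ => σ.card = j)).card = ∑ i ∈ Finset.range e, (n i).choose j :=
  stmt_8_general e n S hcard hglue k
end

section
/- Let n ≥ 2, e ≥ 1, N = e*n - (e-1). Then for every i ≥ 1, the quantity -e*C(N-n, i+1) + (e-1)*C(N-1, i+1) is nonnegative, and it is positive for 1 ≤ i ≤ N-2 when e ≥ 2. -/
/-!
Write `n = m + 1` and `e = d + 1`, so that `N - 1 = (d + 1) m` and `N - n = d m`. The claim becomes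
`(d + 1) C(d m, k) ≤ d C((d + 1) m, k)` for `k = i + 1 ≥ 2`, i.e. `C(a, k) / a ≤ C(b, k) / b` for
`a = d m ≤ b = (d + 1) m`. This holds because `C(a, k) / a = C(a - 1, k - 1) / k` and `C(·, k - 1)`
is monotone, strictly so once `1 ≤ k - 1 ≤ b - 1`.
-/

namespace Nat

theorem choose_lt_choose_of_lt {a b k : ℕ} (hk : 0 < k) (hkb : k ≤ b) (hab : a < b) :
    a.choose k < b.choose k := by
  obtain ⟨c, rfl⟩ : ∃ c, b = c + 1 := ⟨b - 1, by omega⟩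
  obtain ⟨j, rfl⟩ : ∃ j, k = j + 1 := ⟨k - 1, by omega⟩
  have hle : a.choose (j + 1) ≤ c.choose (j + 1) := choose_le_choose _ (by omega)
  have hpos : 0 < c.choose j := choose_pos (by omega)
  rw [choose_succ_succ']
  omega

theorem add_one_mul_choose_add_one (a k : ℕ) :
    (k + 1) * a.choose (k + 1) = a * (a - 1).choose k := by
  cases a with
  | zero => simp
  | succ a => rw [Nat.add_sub_cancel, add_one_mul_choose_eq, mul_comm]

theorem mul_choose_le_mul_choose {a b : ℕ} (k : ℕ) (hab : a ≤ b) :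
    b * a.choose (k + 1) ≤ a * b.choose (k + 1) := by
  refine le_of_mul_le_mul_left ?_ k.succ_pos
  calc (k + 1) * (b * a.choose (k + 1)) = a * b * (a - 1).choose k := by
        rw [mul_left_comm, add_one_mul_choose_add_one]; ring
    _ ≤ a * b * (b - 1).choose k := Nat.mul_le_mul_left _ (choose_le_choose _ (by omega))
    _ = (k + 1) * (a * b.choose (k + 1)) := by
        rw [mul_left_comm, add_one_mul_choose_add_one]; ring

theorem mul_choose_lt_mul_choose {a b k : ℕ} (ha : 0 < a) (hab : a < b) (hk : 0 < k)
    (hkb : k < b) : b * a.choose (k + 1) < a * b.choose (k + 1) := by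
  refine Nat.lt_of_mul_lt_mul_left (a := k + 1) ?_
  calc (k + 1) * (b * a.choose (k + 1)) = a * b * (a - 1).choose k := by
        rw [mul_left_comm, add_one_mul_choose_add_one]; ring
    _ < a * b * (b - 1).choose k :=
        Nat.mul_lt_mul_of_pos_left (choose_lt_choose_of_lt hk (by omega) (by omega))
          (Nat.mul_pos ha (by omega))
    _ = (k + 1) * (a * b.choose (k + 1)) := by
        rw [mul_left_comm, add_one_mul_choose_add_one]; ring

theorem add_one_mul_choose_mul_le (d m k : ℕ) (hm : 0 < m) :
    (d + 1) * (d * m).choose (k + 1) ≤ d * ((d + 1) * m).choose (k + 1) := by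
  refine le_of_mul_le_mul_left ?_ hm
  calc m * ((d + 1) * (d * m).choose (k + 1))
      = (d + 1) * m * (d * m).choose (k + 1) := by ring
    _ ≤ d * m * ((d + 1) * m).choose (k + 1) :=
        mul_choose_le_mul_choose k (Nat.mul_le_mul_right m d.le_succ)
    _ = m * (d * ((d + 1) * m).choose (k + 1)) := by ring

theorem add_one_mul_choose_mul_lt {d m k : ℕ} (hd : 0 < d) (hm : 0 < m) (hk : 0 < k)
    (hkm : k < (d + 1) * m) :
    (d + 1) * (d * m).choose (k + 1) < d * ((d + 1) * m).choose (k + 1) := by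
  refine Nat.lt_of_mul_lt_mul_left (a := m) ?_
  calc m * ((d + 1) * (d * m).choose (k + 1))
      = (d + 1) * m * (d * m).choose (k + 1) := by ring
    _ < d * m * ((d + 1) * m).choose (k + 1) :=
        mul_choose_lt_mul_choose (Nat.mul_pos hd hm)
          (Nat.mul_lt_mul_of_pos_right d.lt_succ_self hm) hk hkm
    _ = m * (d * ((d + 1) * m).choose (k + 1)) := by ring

end Nat

/-- For `n ≥ 2`, `e ≥ 1`, `N = e*n - (e-1)`, and every `i ≥ 1`, the quantity
`-e*C(N-n, i+1) + (e-1)*C(N-1, i+1)` is nonnegative, and it is positive for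
`1 ≤ i ≤ N-2` when `e ≥ 2`. -/
theorem stmt_9 (n e N : ℕ) (hn : 2 ≤ n) (he : 1 ≤ e) (hN : N = e * n - (e - 1)) :
    ∀ i : ℕ, 1 ≤ i →
      (0 ≤ -(e : ℤ) * ((N - n).choose (i + 1) : ℤ) + ((e : ℤ) - 1) * ((N - 1).choose (i + 1) : ℤ)
      ∧ (2 ≤ e → i ≤ N - 2 →
          0 < -(e : ℤ) * ((N - n).choose (i + 1) : ℤ)
              + ((e : ℤ) - 1) * ((N - 1).choose (i + 1) : ℤ))) := by
  intro i hi
  obtain ⟨m, rfl⟩ : ∃ m, n = m + 1 := ⟨n - 1, by omega⟩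
  obtain ⟨d, rfl⟩ : ∃ d, e = d + 1 := ⟨e - 1, by omega⟩
  have hN1 : N - 1 = (d + 1) * m := by rw [hN, Nat.add_sub_cancel]; ring_nf; omega
  have hNn : N - (m + 1) = d * m := by rw [hN, Nat.add_sub_cancel]; ring_nf; omega
  rw [hN1, hNn]
  push_cast
  refine ⟨?_, fun hd hiN => ?_⟩
  · have := Nat.add_one_mul_choose_mul_le d m i (by omega)
    zify at this
    linarith
  · have := Nat.add_one_mul_choose_mul_lt (by omega) (by omega) hi (by omega : i < (d + 1) * m)
    zify at this
    linarith
end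

section
/- Let n_1,…,n_e ≥ 2, 1 ≤ k < max n_s - 1, and i ≥ 1, with N = (∑ n_s) - (e-1). Then the integer ∑_{j=k+2}^{max n_s} ∑_{s=1}^e C(n_s, j) * (-1)^{k-j} * C(N-j, k+i+1-j) is nonnegative whenever k+i+1 ≤ N, where C(a,b)=0 if b<0 or b>a. -/
/-
The sum splits over `s`, and each inner sum
`T(n, N) = ∑_{j ≥ t} (-1)^(j-t) C(n,j) C(N-j, m-j)` (here `t = k+2`, `m = k+i+1`) is already
nonnegative as soon as `n ≤ N`, whatever `m` is. Expanding `C(n+1, j)` and `C(N+1-j, m-j)` by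
Pascal's rule, the cross terms telescope and leave
`T(n+1, N+1) = C(n, t-1) C(N+1-t, m-t) + T(n, N)`,
so `T(n, N)` is a sum of products of binomial coefficients. Finally `n_s ≤ N` because every
other `n_r` is at least `1`.
-/

/-- Binomial coefficient `C(a,b)` for an integer lower index `b`, with the convention
that it is `0` when `b < 0` (and automatically `0` when `b > a`). -/
def chooseZ (a : ℕ) (b : ℤ) : ℤ := if 0 ≤ b then (a.choose b.toNat : ℤ) else 0

open Finset

theorem chooseZ_succ (a : ℕ) (b : ℤ) : chooseZ (a + 1) b = chooseZ a (b - 1) + chooseZ a b := by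
  unfold chooseZ
  rcases lt_trichotomy b 0 with hb | rfl | hb
  · rw [if_neg (by omega), if_neg (by omega), if_neg (by omega), add_zero]
  · simp
  · obtain ⟨c, rfl⟩ : ∃ c : ℕ, b = c + 1 := ⟨b.toNat - 1, by omega⟩
    rw [if_pos (by omega), if_pos (by omega), if_pos (by omega), add_sub_cancel_right,
      Int.toNat_natCast, show ((c : ℤ) + 1).toNat = c + 1 by omega, Nat.choose_succ_succ',
      Nat.cast_add]

theorem chooseZ_nonneg (a : ℕ) (b : ℤ) : 0 ≤ chooseZ a b := by
  unfold chooseZ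
  split_ifs <;> simp

def tailSum (n N : ℕ) (m : ℤ) (t : ℕ) : ℚ :=
  ∑ j ∈ Icc t n, (n.choose j : ℚ) * (-1) ^ ((t : ℤ) - j) * chooseZ (N - j) (m - j)

theorem tailSum_succ {n N t : ℕ} (m : ℤ) (ht : 1 ≤ t) (htn : t ≤ n + 1) (hnN : n ≤ N) :
    tailSum (n + 1) (N + 1) m t =
      n.choose (t - 1) * chooseZ (N + 1 - t) (m - t) + tailSum n N m t := by
  obtain ⟨u, rfl⟩ : ∃ u, t = u + 1 := ⟨t - 1, by omega⟩
  set sgn : ℕ → ℚ := fun j ↦ (-1) ^ (((u + 1 : ℕ) : ℤ) - j) with hsgn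
  have hpascal : ∀ j ∈ Icc (u + 1) (n + 1),
      ((n + 1).choose j : ℚ) * sgn j * chooseZ (N + 1 - j) (m - j) =
        (n.choose (j - 1) : ℚ) * sgn j * chooseZ (N + 1 - j) (m - j) +
        (n.choose j : ℚ) * sgn j * chooseZ (N + 1 - j) (m - j) := by
    intro j hj
    rw [Nat.choose_succ_left n j (by simp at hj; omega)]
    push_cast
    ring
  have hlower : ∑ j ∈ Icc (u + 1) (n + 1), (n.choose (j - 1) : ℚ) * sgn j *
      chooseZ (N + 1 - j) (m - j) = n.choose u * chooseZ (N - u) (m - (u + 1)) -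
        ∑ j ∈ Icc (u + 1) n, (n.choose j : ℚ) * sgn j * chooseZ (N - j) (m - j - 1) := by
    rw [← map_add_right_Icc u n 1, sum_map, Icc_eq_cons_Ioc (by omega), sum_cons,
      ← Icc_add_one_left_eq_Ioc]
    simp only [addRightEmbedding_apply, Nat.add_sub_cancel]
    rw [sub_eq_add_neg _ (∑ j ∈ _, _), ← sum_neg_distrib]
    congr 1
    · simp [hsgn]
    · refine sum_congr rfl fun j _ ↦ ?_
      have hshift : sgn (j + 1) = -sgn j := by
        simp only [hsgn, Nat.cast_add, Nat.cast_one, ← sub_sub,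
          zpow_sub_one₀ (by norm_num : (-1 : ℚ) ≠ 0)]
        simp
      rw [hshift, Nat.add_sub_add_right]
      push_cast
      ring_nf
  have hupper : ∑ j ∈ Icc (u + 1) (n + 1), (n.choose j : ℚ) * sgn j *
      chooseZ (N + 1 - j) (m - j) = ∑ j ∈ Icc (u + 1) n, (n.choose j : ℚ) * sgn j *
      chooseZ (N + 1 - j) (m - j) := by
    rw [sum_Icc_succ_top htn, Nat.choose_succ_self, Nat.cast_zero, zero_mul, zero_mul, add_zero]
  have hmerge : ∀ j ∈ Icc (u + 1) n, (n.choose j : ℚ) * sgn j * chooseZ (N + 1 - j) (m - j) -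
      (n.choose j : ℚ) * sgn j * chooseZ (N - j) (m - j - 1) =
        (n.choose j : ℚ) * sgn j * chooseZ (N - j) (m - j) := by
    intro j hj
    rw [show N + 1 - j = N - j + 1 by simp at hj; omega, chooseZ_succ]
    push_cast
    ring
  simp only [tailSum]
  rw [sum_congr rfl hpascal, sum_add_distrib, hlower, hupper, ← sum_congr rfl hmerge,
    sum_sub_distrib]
  push_cast
  ring

theorem tailSum_nonneg {n N t : ℕ} (m : ℤ) (ht : 1 ≤ t) (hnN : n ≤ N) :
    0 ≤ tailSum n N m t := by
  induction n generalizing N with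
  | zero => simp [tailSum, Icc_eq_empty_of_lt (show 0 < t by omega)]
  | succ n ih =>
    obtain ⟨N, rfl⟩ : ∃ N', N = N' + 1 := ⟨N - 1, by omega⟩
    rcases le_or_gt t (n + 1) with htn | htn
    · rw [tailSum_succ m ht htn (by omega)]
      have hC : (0 : ℚ) ≤ chooseZ (N + 1 - t) (m - t) := by exact_mod_cast chooseZ_nonneg _ _
      exact add_nonneg (mul_nonneg (Nat.cast_nonneg _) hC) (ih (by omega))
    · simp [tailSum, Icc_eq_empty_of_lt htn]

theorem sum_Icc_eq_tailSum {n M : ℕ} (N k : ℕ) (m : ℤ) (hnM : n ≤ M) :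
    ∑ j ∈ Icc (k + 2) M, (n.choose j : ℚ) * (-1) ^ ((k : ℤ) - j) * chooseZ (N - j) (m - j) =
      tailSum n N m (k + 2) := by
  have hsign : ∀ j : ℕ, (-1 : ℚ) ^ ((k : ℤ) - j) = (-1) ^ (((k + 2 : ℕ) : ℤ) - j) := by
    intro j
    rw [show ((k + 2 : ℕ) : ℤ) - j = (k - j) + 2 by push_cast; ring,
      zpow_add₀ (by norm_num : (-1 : ℚ) ≠ 0)]
    norm_num
  simp only [hsign, tailSum]
  refine (sum_subset (Icc_subset_Icc_right hnM) fun j hj hjn ↦ ?_).symm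
  rw [Nat.choose_eq_zero_of_lt (by simp at hj hjn; omega)]
  simp

theorem le_sum_sub_card_sub_one {ι : Type*} [Fintype ι] (f : ι → ℕ) (hf : ∀ s, 1 ≤ f s)
    (s : ι) : f s ≤ ∑ r, f r - (Fintype.card ι - 1) := by
  classical
  have hrest : Fintype.card ι - 1 ≤ ∑ r ∈ univ.erase s, f r := by
    simpa [card_erase_of_mem] using card_nsmul_le_sum (univ.erase s) f 1 fun r _ ↦ hf r
  have := add_sum_erase univ f (mem_univ s)
  omega

theorem stmt_12_general (e : ℕ) (n : Fin e → ℕ) (hn : ∀ s, 2 ≤ n s)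
    (N : ℕ) (hN : N = (∑ s, n s) - (e - 1))
    (M : ℕ) (hM : M = Finset.univ.sup n)
    (k i : ℕ) :
    (0 : ℚ) ≤ ∑ j ∈ Finset.Icc (k + 2) M, ∑ s, ((n s).choose j : ℚ) *
      (-1 : ℚ) ^ ((k : ℤ) - j) * (chooseZ (N - j) ((k : ℤ) + i + 1 - j) : ℚ) := by
  rw [sum_comm]
  refine sum_nonneg fun s _ ↦ ?_
  rw [sum_Icc_eq_tailSum N k _ (hM ▸ le_sup (mem_univ s))]
  have hnN : n s ≤ N := by
    simpa [hN] using le_sum_sub_card_sub_one n (fun r ↦ by linarith [hn r]) s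
  exact tailSum_nonneg _ (by omega) hnN

/-- Let `n_1,…,n_e ≥ 2`, `N = ∑ n_s - (e-1)`, `1 ≤ k < max n_s - 1`, and `i ≥ 1` with
`k+i+1 ≤ N`. Then `∑_{j=k+2}^{max n_s} ∑_s C(n_s,j) (-1)^(k-j) C(N-j, k+i+1-j) ≥ 0`,
with the convention `C(a,b) = 0` for `b < 0` or `b > a`. -/
theorem stmt_12 (e : ℕ) (n : Fin e → ℕ) (hn : ∀ s, 2 ≤ n s)
    (N : ℕ) (hN : N = (∑ s, n s) - (e - 1))
    (M : ℕ) (hM : M = Finset.univ.sup n)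
    (k i : ℕ) (hk1 : 1 ≤ k) (hk2 : k < M - 1) (hi : 1 ≤ i) (hkiN : k + i + 1 ≤ N) :
    (0 : ℚ) ≤ ∑ j ∈ Finset.Icc (k + 2) M, ∑ s, ((n s).choose j : ℚ) *
      (-1 : ℚ) ^ ((k : ℤ) - j) * (chooseZ (N - j) ((k : ℤ) + i + 1 - j) : ℚ) :=
  stmt_12_general e n hn N hN M hM k i
end

section
/- Let n ≥ 3, e ≥ 1, k ≥ 2 with k < n - 1, and N = e*n - (e-1). Then the minimal monomial generators of the Stanley-Reisner ideal I of the k-skeleton Δ(n,e)_{(k)} occur exactly in degrees 2 and k+2: the degree-2 generators are the products x_i x_j over pairs of vertices not lying in a common facet, and the degree-(k+2) generators are the squarefree monomials x_{i_1}⋯x_{i_{k+2}} with all vertices in one facet. -/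
/-!
Because each facet meets the union of the earlier ones in a single point, no three vertices can
be joined pairwise by three different facets: the facet of largest index would meet the two
earlier ones in two distinct points. Hence a set of at least three vertices all of whose
one-point deletions lie in facets lies in a facet itself, so a minimal non-face lying in no
facet is an edge. A minimal non-face inside a facet is only too large, hence has `k + 2`
vertices.
-/

open Finset

namespace SuccessiveGluing

variable {V : Type*} [DecidableEq V] {e k : ℕ} {S : ℕ → Finset V}

def InFacet (e : ℕ) (S : ℕ → Finset V) (τ : Finset V) : Prop := ∃ i < e, τ ⊆ S i

def IsSkeletonFace (k e : ℕ) (S : ℕ → Finset V) (τ : Finset V) : Prop :=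
  τ.card ≤ k + 1 ∧ InFacet e S τ

section Glued

variable (hglue : ∀ i, i + 1 < e → ∃ p : V, ((range (i + 1)).biUnion S) ∩ S (i + 1) = {p})
include hglue

theorem eq_of_mem_later_facet {i i' j : ℕ} (hj : j < e) (hi : i < j) (hi' : i' < j) {x y : V}
    (hxi : x ∈ S i) (hyi' : y ∈ S i') (hxj : x ∈ S j) (hyj : y ∈ S j) : x = y := by
  obtain ⟨p, hp⟩ := hglue (j - 1) (by omega)
  rw [Nat.sub_add_cancel (by omega : 1 ≤ j)] at hp
  have hx : x ∈ (range j).biUnion S ∩ S j := mem_inter.2 ⟨mem_biUnion.2 ⟨i, mem_range.2 hi, hxi⟩, hxj⟩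
  have hy : y ∈ (range j).biUnion S ∩ S j := mem_inter.2 ⟨mem_biUnion.2 ⟨i', mem_range.2 hi', hyi'⟩, hyj⟩
  rw [hp, mem_singleton] at hx hy
  rw [hx, hy]

theorem not_triangle {i j l : ℕ} (hi : i < e) (hj : j < e) (hl : l < e)
    (hij : i ≠ j) (hil : i ≠ l) (hjl : j ≠ l) {a b c : V} (hab : a ≠ b) (hac : a ≠ c) (hbc : b ≠ c)
    (hbi : b ∈ S i) (hci : c ∈ S i) (haj : a ∈ S j) (hcj : c ∈ S j) (hal : a ∈ S l)
    (hbl : b ∈ S l) : False := by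
  rcases (by omega : (j < i ∧ l < i) ∨ (i < j ∧ l < j) ∨ (i < l ∧ j < l)) with
    ⟨hji, hli⟩ | ⟨hij', hlj⟩ | ⟨hil', hjl'⟩
  · exact hbc (eq_of_mem_later_facet hglue hi hli hji hbl hcj hbi hci)
  · exact hac (eq_of_mem_later_facet hglue hj hlj hij' hal hci haj hcj)
  · exact hab (eq_of_mem_later_facet hglue hl hjl' hil' haj hbi hal hbl)

theorem inFacet_of_forall_erase {σ : Finset V} (hσ : 2 < σ.card)
    (herase : ∀ x ∈ σ, InFacet e S (σ.erase x)) : InFacet e S σ := by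
  by_contra hσS
  have avoid : ∀ x ∈ σ, ∃ i < e, σ.erase x ⊆ S i ∧ x ∉ S i := by
    intro x hx
    obtain ⟨i, hi, hsub⟩ := herase x hx
    refine ⟨i, hi, hsub, fun hxi => hσS ⟨i, hi, ?_⟩⟩
    rw [← insert_erase hx]
    exact insert_subset hxi hsub
  obtain ⟨a, ha, b, hb, c, hc, hab, hac, hbc⟩ := two_lt_card.1 hσ
  obtain ⟨i, hi, hσi, hai⟩ := avoid a ha
  obtain ⟨j, hj, hσj, hbj⟩ := avoid b hb
  obtain ⟨l, hl, hσl, hcl⟩ := avoid c hc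
  have hbi : b ∈ S i := hσi (mem_erase.2 ⟨hab.symm, hb⟩)
  have hci : c ∈ S i := hσi (mem_erase.2 ⟨hac.symm, hc⟩)
  have hcj : c ∈ S j := hσj (mem_erase.2 ⟨hbc.symm, hc⟩)
  exact not_triangle hglue hi hj hl (fun h => hbj (h ▸ hbi)) (fun h => hcl (h ▸ hci))
    (fun h => hcl (h ▸ hcj)) hab hac hbc hbi hci (hσj (mem_erase.2 ⟨hab, ha⟩)) hcj
    (hσl (mem_erase.2 ⟨hac, ha⟩)) (hσl (mem_erase.2 ⟨hbc, hb⟩))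

end Glued

theorem inFacet_of_card_le_one (he : 0 < e) {τ : Finset V} (hτ : τ ⊆ (range e).biUnion S)
    (hcard : τ.card ≤ 1) : InFacet e S τ := by
  rcases τ.eq_empty_or_nonempty with rfl | ⟨v, hv⟩
  · exact ⟨0, he, empty_subset _⟩
  · obtain ⟨i, hi, hvi⟩ := mem_biUnion.1 (hτ hv)
    refine ⟨i, mem_range.1 hi, fun x hx => ?_⟩
    rwa [card_le_one.1 hcard x hx v hv]

theorem card_le_of_forall_ssubset_face {σ : Finset V} (hne : σ.Nonempty)
    (hmin : ∀ τ ⊂ σ, IsSkeletonFace k e S τ) : σ.card ≤ k + 2 := by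
  obtain ⟨x, hx⟩ := hne
  have := (hmin _ (erase_ssubset hx)).1
  rw [card_erase_of_mem hx] at this
  omega

theorem minimal_nonFace_iff
    (hglue : ∀ i, i + 1 < e → ∃ p : V, ((range (i + 1)).biUnion S) ∩ S (i + 1) = {p})
    (he : 0 < e) {σ : Finset V} (hσ : σ ⊆ (range e).biUnion S) :
    (¬ IsSkeletonFace k e S σ ∧ ∀ τ ⊂ σ, IsSkeletonFace k e S τ) ↔
      (σ.card = 2 ∧ ¬ InFacet e S σ) ∨ (σ.card = k + 2 ∧ InFacet e S σ) := by
  constructor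
  · rintro ⟨hσface, hmin⟩
    by_cases hσS : InFacet e S σ
    · have hlarge : k + 1 < σ.card := by
        by_contra h
        exact hσface ⟨by omega, hσS⟩
      exact .inr ⟨le_antisymm (card_le_of_forall_ssubset_face (card_pos.1 (by omega)) hmin)
        hlarge, hσS⟩
    · have hpair : 1 < σ.card := by
        by_contra h
        exact hσS (inFacet_of_card_le_one he hσ (by omega))
      have hle : σ.card ≤ 2 := by
        by_contra h
        exact hσS (inFacet_of_forall_erase hglue (by omega)
          fun x hx => (hmin _ (erase_ssubset hx)).2)
      exact .inl ⟨by omega, hσS⟩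
  · rintro (⟨hcard, hσS⟩ | ⟨hcard, i, hi, hσi⟩)
    · refine ⟨fun h => hσS h.2, fun τ hτ => ?_⟩
      have := card_lt_card hτ
      exact ⟨by omega, inFacet_of_card_le_one he (hτ.subset.trans hσ) (by omega)⟩
    · refine ⟨fun h => (by omega : ¬ σ.card ≤ k + 1) h.1, fun τ hτ => ?_⟩
      have := card_lt_card hτ
      exact ⟨by omega, i, hi, hτ.subset.trans hσi⟩

end SuccessiveGluing

theorem stmt_15_general {V : Type*} [DecidableEq V] (e k : ℕ)
    (he : 1 ≤ e) (S : ℕ → Finset V)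
    (hglue : ∀ i, i + 1 < e → ∃ p : V, ((Finset.range (i + 1)).biUnion S) ∩ S (i + 1) = {p}) :
    ∀ σ : Finset V, σ ⊆ (Finset.range e).biUnion S →
      (((¬ (σ.card ≤ k + 1 ∧ ∃ i < e, σ ⊆ S i)) ∧
          ∀ τ ⊂ σ, τ.card ≤ k + 1 ∧ ∃ i < e, τ ⊆ S i) ↔
        ((σ.card = 2 ∧ ¬ ∃ i < e, σ ⊆ S i) ∨ (σ.card = k + 2 ∧ ∃ i < e, σ ⊆ S i))) :=
  fun _ hσ => SuccessiveGluing.minimal_nonFace_iff hglue he hσ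

/-- Let `n ≥ 3`, `e ≥ 1`, `2 ≤ k < n - 1`, and let `Δ(n,e)` have facets `S_0,…,S_{e-1}`,
each with `n` vertices, glued successively along single points. The faces of the
`k`-skeleton `Δ(n,e)_(k)` are the subsets of facets of cardinality at most `k+1`. Then
the minimal non-faces (equivalently, the minimal monomial generators of the
Stanley–Reisner ideal) occur exactly in cardinalities (degrees) `2` and `k+2`: a subset
`σ` of the vertex set is a minimal non-face if and only if either `σ` has two elements
not lying in a common facet, or `σ` has `k+2` elements all lying in one facet. -/
theorem stmt_15 {V : Type*} [DecidableEq V] (n e k : ℕ)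
    (hn : 3 ≤ n) (he : 1 ≤ e) (hk2 : 2 ≤ k) (hkn : k < n - 1)
    (S : ℕ → Finset V) (hcard : ∀ i < e, (S i).card = n)
    (hglue : ∀ i, i + 1 < e → ∃ p : V, ((Finset.range (i + 1)).biUnion S) ∩ S (i + 1) = {p}) :
    ∀ σ : Finset V, σ ⊆ (Finset.range e).biUnion S →
      (((¬ (σ.card ≤ k + 1 ∧ ∃ i < e, σ ⊆ S i)) ∧
          ∀ τ ⊂ σ, τ.card ≤ k + 1 ∧ ∃ i < e, τ ⊆ S i) ↔
        ((σ.card = 2 ∧ ¬ ∃ i < e, σ ⊆ S i) ∨ (σ.card = k + 2 ∧ ∃ i < e, σ ⊆ S i))) :=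
  stmt_15_general e k he S hglue
end
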